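/- Let T: ℂ[x] → ℂ[x] be the ℂ-linear map defined by T(g) = x(1−x)·g′ + 2x·g, where g′ denotes the derivative of g. Then the quotient ℂ-vector space ℂ[x]/T(ℂ[x]) has dimension 2, and the residue classes of 1 and x³ form a ℂ-basis of it. -/

import Mathlib

/-! Since `T(xⁿ) = n xⁿ + (2 - n) xⁿ⁺¹`, modulo the image of `T` we have `x ≡ 0`, `x² ≡ 0` and
`xⁿ⁺¹ ≡ -n/(2-n) xⁿ` for `n ≥ 3`, so every `g` is congruent to `g(0)·1 + φ(g)·x³` with
`φ(xⁿ) = (n-1)(n-2)/2` for `n ≥ 1`. Conversely, evaluation at `0` and `φ` vanish on the image, so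
`g ↦ (g(0), φ(g))` identifies the quotient with `ℂ²`, sending `1` and `x³` to the standard basis. -/

open Polynomial

/-- The ℂ-linear operator `T(g) = x(1−x)·g′ + 2x·g` on `ℂ[x]`. -/
noncomputable def T : Polynomial ℂ →ₗ[ℂ] Polynomial ℂ :=
  ((X * (1 - X) : Polynomial ℂ)) • (Polynomial.derivative : Polynomial ℂ →ₗ[ℂ] Polynomial ℂ) +
    ((2 * X : Polynomial ℂ)) • (LinearMap.id : Polynomial ℂ →ₗ[ℂ] Polynomial ℂ)

theorem Submodule.exists_basis_quotient_of_ker_eq {R M ι : Type*} [CommRing R] [AddCommGroup M]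
    [Module R M] [Fintype ι] [DecidableEq ι] {N : Submodule R M} (f : M →ₗ[R] ι → R)
    (hf : LinearMap.ker f = N) (v : ι → M) (hv : ∀ i, f (v i) = Pi.single i 1) :
    ∃ B : Module.Basis ι R (M ⧸ N), ∀ i, B i = Submodule.Quotient.mk (v i) := by
  have hsurj : Function.Surjective f := fun c =>
    ⟨∑ i, c i • v i, by simpa [hv] using (pi_eq_sum_univ' c).symm⟩
  let e : (M ⧸ N) ≃ₗ[R] ι → R :=
    (N.quotEquivOfEq _ hf.symm).trans (f.quotKerEquivOfSurjective hsurj)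
  refine ⟨Module.Basis.ofEquivFun e, fun i => ?_⟩
  rw [Module.Basis.coe_ofEquivFun, LinearEquiv.symm_apply_eq]
  simp [e, hv]

theorem T_apply (g : ℂ[X]) : T g = X * (1 - X) * derivative g + 2 * X * g := by
  simp [T, smul_eq_mul]

theorem eval_zero_T (g : ℂ[X]) : (T g).eval 0 = 0 := by
  simp [T_apply]

theorem T_X_pow (n : ℕ) : T ((X : ℂ[X]) ^ n) = (n : ℂ) • X ^ n + (2 - n : ℂ) • X ^ (n + 1) := by
  rw [T_apply, derivative_X_pow]
  cases n with
  | zero => simp [two_smul, two_mul]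
  | succ m =>
    simp only [Nat.add_sub_cancel, smul_eq_C_mul, map_sub, map_natCast, map_ofNat]
    ring

/- The solution of the recurrence `n aₙ + (2-n) aₙ₊₁ = 0` read off from `T_X_pow`, normalised by
`a₃ = 1`; the value `a₀ = 0` keeps the constant term out of the `x³`-part. -/
noncomputable def x3Coeff (n : ℕ) : ℂ := if n = 0 then 0 else ((n : ℂ) - 1) * ((n : ℂ) - 2) / 2

theorem x3Coeff_recurrence (n : ℕ) : n * x3Coeff n + (2 - n) * x3Coeff (n + 1) = 0 := by
  cases n with
  | zero => simp [x3Coeff]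
  | succ m =>
    simp only [x3Coeff, Nat.succ_ne_zero, if_false]
    push_cast
    ring

noncomputable def x3Part : ℂ[X] →ₗ[ℂ] ℂ :=
  lsum fun n => x3Coeff n • LinearMap.id

theorem x3Part_X_pow (n : ℕ) : x3Part (X ^ n) = x3Coeff n := by
  simp [x3Part, X_pow_eq_monomial, sum_monomial_index]

theorem x3Part_one : x3Part 1 = 0 := by
  simpa [x3Coeff] using x3Part_X_pow 0

theorem x3Part_T (g : ℂ[X]) : x3Part (T g) = 0 := by
  suffices x3Part ∘ₗ T = 0 from LinearMap.congr_fun this g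
  refine lhom_ext' fun n => LinearMap.ext_ring ?_
  simpa [monomial_one_right_eq_X_pow, T_X_pow, x3Part_X_pow] using x3Coeff_recurrence n

local notation "π" => Submodule.Quotient.mk (p := LinearMap.range T)

theorem mk_T (g : ℂ[X]) : π (T g) = 0 :=
  (Submodule.Quotient.mk_eq_zero _).2 (LinearMap.mem_range_self T g)

theorem mk_X_pow (n : ℕ) (hn : 1 ≤ n) : π (X ^ n) = x3Coeff n • π (X ^ 3) := by
  have relation (m : ℕ) : (m : ℂ) • π (X ^ m) + (2 - m : ℂ) • π (X ^ (m + 1)) = 0 := by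
    simpa [T_X_pow] using mk_T (X ^ m)
  induction n, hn using Nat.le_induction with
  | base => simpa [x3Coeff] using relation 0
  | succ n hn ih =>
    obtain rfl | hn2 := eq_or_ne n 2
    · norm_num [x3Coeff]
    have h2n : (2 - n : ℂ) ≠ 0 := sub_ne_zero.2 (by exact_mod_cast hn2.symm)
    refine smul_right_injective _ h2n ?_
    linear_combination (norm := module)
      relation n - (n : ℂ) • ih - x3Coeff_recurrence n • π (X ^ 3)

theorem mk_eq (g : ℂ[X]) : π g = g.eval 0 • π 1 + x3Part g • π (X ^ 3) := by
  suffices (LinearMap.range T).mkQ = (leval 0).smulRight (π 1) + x3Part.smulRight (π (X ^ 3)) from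
    LinearMap.congr_fun this g
  refine lhom_ext' fun n => LinearMap.ext_ring ?_
  rcases Nat.eq_zero_or_pos n with rfl | hn
  · simp [x3Part_one]
  · simp [monomial_one_right_eq_X_pow, x3Part_X_pow, hn.ne', mk_X_pow n hn]

noncomputable def residue : ℂ[X] →ₗ[ℂ] Fin 2 → ℂ :=
  LinearMap.pi ![leval 0, x3Part]

theorem ker_residue : LinearMap.ker residue = LinearMap.range T := by
  ext g
  constructor
  · intro hg
    have h0 : g.eval 0 = 0 := congr_fun hg 0
    have h1 : x3Part g = 0 := congr_fun hg 1
    rw [← Submodule.Quotient.mk_eq_zero, mk_eq, h0, h1, zero_smul, zero_smul, add_zero]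
  · rintro ⟨g, rfl⟩
    ext i
    fin_cases i
    · exact eval_zero_T g
    · exact x3Part_T g

/-- the quotient `ℂ[x]/T(ℂ[x])` is a 2-dimensional ℂ-vector space and
the classes of `1` and `x³` form a ℂ-basis of it. -/
theorem stmt14 :
    Module.finrank ℂ (Polynomial ℂ ⧸ LinearMap.range T) = 2 ∧
    ∃ B : Module.Basis (Fin 2) ℂ (Polynomial ℂ ⧸ LinearMap.range T),
      B 0 = Submodule.Quotient.mk (1 : Polynomial ℂ) ∧
      B 1 = Submodule.Quotient.mk ((X : Polynomial ℂ) ^ 3) := by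
  obtain ⟨B, hB⟩ := Submodule.exists_basis_quotient_of_ker_eq residue ker_residue ![1, X ^ 3] <| by
    intro i
    ext j
    fin_cases i <;> fin_cases j <;> norm_num [residue, x3Part_one, x3Part_X_pow, x3Coeff]
  exact ⟨by simp [Module.finrank_eq_card_basis B], B, hB 0, hB 1⟩
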